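/- arXiv:2301.10042 — 4 statements merged into one kernel-verified Lean document; each statement's English description precedes it below -/
import Mathlib

section
/- Let G be a simple connected graph on nodes {1,…,n}, let {y_{ij}} (for i = j or {i,j} an edge of G) be independent variables, let F be the field of fractions of the polynomial ring over ℝ in these variables, and let A(y) be the symmetric n×n matrix over F with A(y)_{ii} = y_{ii}, A(y)_{ij} = y_{ij} if {i,j} is an edge of G, and A(y)_{ij} = 0 otherwise. Then the characteristic polynomial of A(y) has n roots λ₁,…,λ_n in an algebraic closure of F, and these roots are linearly independent over ℚ. -/
/-!
The eigenvalues of `A(y)` are integral over the polynomial ring `R = ℝ[y]`, so every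
specialization `R → ℂ` of the variables extends to a ring homomorphism on the integral closure
of `R`, and this homomorphism maps the eigenvalues of `A(y)`, with multiplicities, onto those of
the specialized matrix. Send `y_ii` to `z ^ i` for a transcendental `z` and every off-diagonal
variable to `0`: the specialized matrix is diagonal with the `ℤ`-linearly independent
eigenvalues `1, z, …, z ^ (n - 1)`, so a `ℤ`-linear relation among the eigenvalues of `A(y)`
would map to one among these. Independence over `ℚ` follows by clearing denominators.
-/

theorem Transcendental.linearIndependent_pow {R A : Type*} [CommRing R] [Ring A] [Algebra R A]
    {x : A} (hx : Transcendental R x) : LinearIndependent R fun i : ℕ => x ^ i := by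
  have h := (Polynomial.basisMonomials R).linearIndependent.map' (Polynomial.aeval x).toLinearMap
    (LinearMap.ker_eq_bot.mpr (transcendental_iff_injective.mp hx))
  simpa [Function.comp_def] using h

theorem LinearIndependent.of_univ_map_eq {ι R M : Type*} [Fintype ι] [Ring R] [Nontrivial R]
    [AddCommGroup M] [Module R M] {v w : ι → M} (hw : LinearIndependent R w)
    (h : Finset.univ.val.map v = Finset.univ.val.map w) : LinearIndependent R v := by
  have hv : Function.Injective v := by
    have hnodup : (Finset.univ.val.map v).Nodup := h ▸ Finset.univ.nodup.map hw.injective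
    exact fun i j hij => Multiset.inj_on_of_nodup_map hnodup i (Finset.mem_univ_val i) j
      (Finset.mem_univ_val j) hij
  have hrange : Set.range v = Set.range w := by
    ext x
    simpa using congr(x ∈ $h)
  have hw' := (linearIndepOn_range_iff hw.injective id).mpr hw
  rw [← hrange] at hw'
  exact (linearIndepOn_range_iff hv id).mp hw'

theorem algebraMap_algebraicClosure_fractionRing_injective (R : Type*) [CommRing R] [IsDomain R] :
    Function.Injective (algebraMap R (AlgebraicClosure (FractionRing R))) := by
  rw [IsScalarTower.algebraMap_eq R (FractionRing R)]
  exact (algebraMap (FractionRing R) _).injective.comp (IsFractionRing.injective R _)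

theorem RingHom.exists_comp_algebraMap_eq_of_isIntegral {R S L : Type*} [CommRing R] [CommRing S]
    [Algebra R S] [Algebra.IsIntegral R S] [Field L] [IsAlgClosed L] (φ : R →+* L)
    (hker : RingHom.ker (algebraMap R S) ≤ RingHom.ker φ) :
    ∃ ψ : S →+* L, ψ.comp (algebraMap R S) = φ := by
  set P := RingHom.ker φ
  have : P.IsPrime := RingHom.ker_isPrime φ
  obtain ⟨Q, -, hQ, hQP⟩ := Ideal.exists_ideal_over_prime_of_isIntegral P (⊥ : Ideal S)
    (by rwa [← RingHom.ker_eq_comap_bot])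
  have : Q.LiesOver P := ⟨hQP.symm⟩
  let : Algebra (R ⧸ P) L := (RingHom.kerLift φ).toAlgebra
  have : Module.IsTorsionFree (R ⧸ P) L :=
    Module.isTorsionFree_iff_algebraMap_injective.mpr (RingHom.kerLift_injective φ)
  have : Module.IsTorsionFree (R ⧸ P) (S ⧸ Q) :=
    Module.isTorsionFree_iff_algebraMap_injective.mpr (FaithfulSMul.algebraMap_injective _ _)
  let ψ₀ : (S ⧸ Q) →ₐ[R ⧸ P] L := IsAlgClosed.lift
  exact ⟨ψ₀.toRingHom.comp (Ideal.Quotient.mk Q),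
    RingHom.ext fun r => ψ₀.commutes (Ideal.Quotient.mk P r)⟩

section
open Polynomial

theorem Polynomial.roots_prod_X_sub_C_univ {ι R : Type*} [Fintype ι] [CommRing R] [IsDomain R]
    (f : ι → R) : (∏ i, (X - C (f i))).roots = Finset.univ.val.map f := by
  simp [Polynomial.roots_prod, Finset.prod_ne_zero_iff, X_sub_C_ne_zero]

theorem Polynomial.exists_fin_roots_map_eq {F K : Type*} [Field F] [Field K] [IsAlgClosed K]
    (f : F →+* K) {p : F[X]} {n : ℕ} (hp : p.natDegree = n) :
    ∃ lam : Fin n → K, (p.map f).roots = Finset.univ.val.map lam := by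
  have hcard : (p.map f).roots.card = n :=
    hp ▸ IsAlgClosed.card_roots_map_eq_natDegree_of_injective p f.injective
  generalize (p.map f).roots = s at hcard ⊢
  subst hcard
  refine ⟨fun i => s.toList.get (i.cast s.length_toList.symm), ?_⟩
  conv_lhs => rw [← s.coe_toList, ← List.ofFn_get s.toList]
  simp

theorem Polynomial.Monic.eq_prod_X_sub_C_of_roots_eq {ι K : Type*} [Fintype ι] [Field K]
    [IsAlgClosed K] {p : K[X]} (hp : p.Monic) {f : ι → K}
    (h : p.roots = Finset.univ.val.map f) : p = ∏ i, (X - C (f i)) := by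
  rw [← prod_multiset_X_sub_C_of_monic_of_roots_card_eq hp IsAlgClosed.card_roots_eq_natDegree, h,
    Multiset.map_map, Finset.prod_eq_multiset_prod]
  rfl

theorem linearIndependent_of_specialization {ι R K L : Type*} [Fintype ι] [CommRing R] [Field K]
    [Algebra R K] [Field L] [IsAlgClosed L] (hinj : Function.Injective (algebraMap R K))
    (φ : R →+* L) {p : R[X]} (hp : p.Monic) {lam : ι → K}
    (hlam : p.map (algebraMap R K) = ∏ i, (X - C (lam i))) {a : ι → L}
    (ha : LinearIndependent ℤ a) (hpa : p.map φ = ∏ i, (X - C (a i))) :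
    LinearIndependent ℤ lam := by
  have hint (i : ι) : IsIntegral R (lam i) := ⟨p, hp, by
    rw [← eval_map, hlam, eval_prod]
    exact Finset.prod_eq_zero (Finset.mem_univ i) (by simp)⟩
  let μ : ι → integralClosure R K := fun i => ⟨lam i, hint i⟩
  have hRS : Function.Injective (algebraMap R (integralClosure R K)) :=
    .of_comp (f := algebraMap _ K) hinj
  obtain ⟨ψ, hψ⟩ := RingHom.exists_comp_algebraMap_eq_of_isIntegral (S := integralClosure R K) φ
    (by simp [(RingHom.injective_iff_ker_eq_bot _).mp hRS])
  have hμ : p.map (algebraMap R (integralClosure R K)) = ∏ i, (X - C (μ i)) := by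
    refine map_injective (algebraMap (integralClosure R K) K) Subtype.val_injective ?_
    simpa [Polynomial.map_map, Polynomial.map_prod, ← IsScalarTower.algebraMap_eq] using hlam
  have hψμ : Finset.univ.val.map (ψ ∘ μ) = Finset.univ.val.map a := by
    rw [← roots_prod_X_sub_C_univ, ← roots_prod_X_sub_C_univ, ← hpa, ← hψ, ← Polynomial.map_map,
      hμ, Polynomial.map_prod]
    simp
  have hμ_indep := (ha.of_univ_map_eq hψμ).of_comp ψ.toIntAlgHom.toLinearMap
  exact hμ_indep.map' (integralClosure R K).val.toRingHom.toIntAlgHom.toLinearMap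
    (LinearMap.ker_eq_bot.mpr Subtype.val_injective)

end

open Matrix MvPolynomial

open scoped Classical in
/-- The generic element of the LSSM `L_G` attached to a graph `G`: the symmetric matrix over
the field of fractions `F` of the polynomial ring `ℝ[y_{ij} : i = j or {i,j} ∈ E(G)]`
whose `(i,j)` entry is the variable `y_{ij}` if `i = j` or `{i,j}` is an edge of `G`,
and `0` otherwise. -/
noncomputable def graphGenericMatrix {n : ℕ} (G : SimpleGraph (Fin n)) :
    Matrix (Fin n) (Fin n)
      (FractionRing (MvPolynomial {s : Sym2 (Fin n) // s.IsDiag ∨ s ∈ G.edgeSet} ℝ)) :=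
  Matrix.of fun i j =>
    if h : (s(i, j) : Sym2 (Fin n)).IsDiag ∨ s(i, j) ∈ G.edgeSet then
      algebraMap (MvPolynomial {s : Sym2 (Fin n) // s.IsDiag ∨ s ∈ G.edgeSet} ℝ)
        (FractionRing (MvPolynomial {s : Sym2 (Fin n) // s.IsDiag ∨ s ∈ G.edgeSet} ℝ))
        (MvPolynomial.X ⟨s(i, j), h⟩)
    else 0

section

variable {n : ℕ}

open scoped Classical in
noncomputable def graphPolyMatrix (G : SimpleGraph (Fin n)) :
    Matrix (Fin n) (Fin n) (MvPolynomial {s : Sym2 (Fin n) // s.IsDiag ∨ s ∈ G.edgeSet} ℝ) :=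
  Matrix.of fun i j =>
    if h : (s(i, j) : Sym2 (Fin n)).IsDiag ∨ s(i, j) ∈ G.edgeSet then X ⟨s(i, j), h⟩ else 0

theorem graphGenericMatrix_eq_map (G : SimpleGraph (Fin n)) :
    graphGenericMatrix G = (graphPolyMatrix G).map (algebraMap _ _) := by
  ext i j
  simp only [graphGenericMatrix, graphPolyMatrix, map_apply, of_apply]
  split_ifs <;> simp

def diagonalPoint {ι R : Type*} [DecidableEq ι] [Zero R] (d : ι → R) : Sym2 ι → R :=
  Sym2.lift ⟨fun i j => if i = j then d i else 0, fun i j => by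
    by_cases h : i = j
    · subst h; rfl
    · simp [h, Ne.symm h]⟩

theorem graphPolyMatrix_map_eval₂Hom_diagonalPoint {T : Type*} [CommSemiring T]
    (G : SimpleGraph (Fin n)) (f : ℝ →+* T) (d : Fin n → T) :
    (graphPolyMatrix G).map (eval₂Hom f fun v => diagonalPoint d v.1) = diagonal d := by
  ext i j
  by_cases hij : i = j
  · subst hij
    simp [graphPolyMatrix, diagonalPoint]
  · simp only [graphPolyMatrix, map_apply, of_apply, diagonal_apply_ne _ hij]
    split_ifs <;> simp [diagonalPoint, hij]

end

theorem graph_lssm_eigenvalues_rat_linearIndependent_general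
    (n : ℕ) (G : SimpleGraph (Fin n)) :
    ∃ lam : Fin n →
        AlgebraicClosure
          (FractionRing (MvPolynomial {s : Sym2 (Fin n) // s.IsDiag ∨ s ∈ G.edgeSet} ℝ)),
      ((graphGenericMatrix G).charpoly.map
            (algebraMap
              (FractionRing (MvPolynomial {s : Sym2 (Fin n) // s.IsDiag ∨ s ∈ G.edgeSet} ℝ))
              (AlgebraicClosure
                (FractionRing
                  (MvPolynomial {s : Sym2 (Fin n) // s.IsDiag ∨ s ∈ G.edgeSet} ℝ))))).roots =
          Multiset.map lam Finset.univ.val ∧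
        LinearIndependent ℚ lam := by
  refine (Polynomial.exists_fin_roots_map_eq _ ((charpoly_natDegree_eq_dim _).trans
    (Fintype.card_fin n))).imp fun lam hlam => ⟨hlam, ?_⟩
  rw [graphGenericMatrix_eq_map, charpoly_map, Polynomial.map_map,
    ← IsScalarTower.algebraMap_eq] at hlam
  let z : ℂ := algebraMap ℝ ℂ (liouvilleNumber 3)
  have hz : Transcendental ℤ z := (transcendental_algebraMap_iff (algebraMap ℝ ℂ).injective).mpr
    (transcendental_liouvilleNumber (by norm_num))
  refine (LinearIndependent.iff_fractionRing ℤ ℚ).mp <| linearIndependent_of_specialization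
    (algebraMap_algebraicClosure_fractionRing_injective _)
    (eval₂Hom (algebraMap ℝ ℂ) fun v => diagonalPoint (fun i : Fin n => z ^ (i : ℕ)) v.1)
    (charpoly_monic _) (((charpoly_monic _).map _).eq_prod_X_sub_C_of_roots_eq hlam)
    (hz.linearIndependent_pow.comp _ Fin.val_injective) ?_
  rw [← charpoly_map, graphPolyMatrix_map_eval₂Hom_diagonalPoint, charpoly_diagonal]
  rfl

/-- For a simple connected graph `G`, the characteristic polynomial of the
generic element of `L_G` has `n` roots in an algebraic closure, and these roots are
`ℚ`-linearly independent. -/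
theorem graph_lssm_eigenvalues_rat_linearIndependent
    (n : ℕ) (G : SimpleGraph (Fin n)) (hG : G.Connected) :
    ∃ lam : Fin n →
        AlgebraicClosure
          (FractionRing (MvPolynomial {s : Sym2 (Fin n) // s.IsDiag ∨ s ∈ G.edgeSet} ℝ)),
      ((graphGenericMatrix G).charpoly.map
            (algebraMap
              (FractionRing (MvPolynomial {s : Sym2 (Fin n) // s.IsDiag ∨ s ∈ G.edgeSet} ℝ))
              (AlgebraicClosure
                (FractionRing
                  (MvPolynomial {s : Sym2 (Fin n) // s.IsDiag ∨ s ∈ G.edgeSet} ℝ))))).roots =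
          Multiset.map lam Finset.univ.val ∧
        LinearIndependent ℚ lam :=
  graph_lssm_eigenvalues_rat_linearIndependent_general n G
end

section
/- Let G be a tree on n ≥ 2 nodes, and let A be a real symmetric n×n matrix such that A_{ij} = 0 whenever i ≠ j and {i,j} is not an edge of G, and A_{ij} ≠ 0 whenever {i,j} is an edge of G. Then the set of real symmetric n×n matrices Y satisfying Y_{ij} = 0 for all non-adjacent pairs i ≠ j and AY = YA is exactly the two-dimensional real linear span of the identity matrix and A. -/
open Matrix
/-- The LSSM `L_G` attached to a graph `G`: all real symmetric matrices `A` with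
`A i j = 0` whenever `i ≠ j` and `{i,j}` is not an edge of `G`. -/
def graphLSSM {n : ℕ} (G : SimpleGraph (Fin n)) :
    Submodule ℝ (Matrix (Fin n) (Fin n) ℝ) where
  carrier := {A | A.IsSymm ∧ ∀ i j, i ≠ j → ¬ G.Adj i j → A i j = 0}
  add_mem' := by
    intro a b ha hb
    exact ⟨ha.1.add hb.1, fun i j hij hadj => by
      simp [Matrix.add_apply, ha.2 i j hij hadj, hb.2 i j hij hadj]⟩
  zero_mem' := ⟨Matrix.isSymm_zero, fun i j _ _ => rfl⟩
  smul_mem' := by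
    intro c a ha
    exact ⟨ha.1.smul c, fun i j hij hadj => by
      simp [Matrix.smul_apply, ha.2 i j hij hadj]⟩



section aux
variable {n : ℕ} {G : SimpleGraph (Fin n)}

lemma aux_not_adj (hac : G.IsAcyclic) {a k b : Fin n} (h1 : G.Adj a k) (h2 : G.Adj k b)
    (hab : a ≠ b) : ¬ G.Adj a b := by
  intro h
  have hpu := SimpleGraph.isAcyclic_iff_path_unique.mp hac
  have hp2 : (SimpleGraph.Walk.cons h1 (SimpleGraph.Walk.cons h2 SimpleGraph.Walk.nil)).IsPath := by
    simp [SimpleGraph.Walk.isPath_def, h1.ne, h2.ne, hab]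
  have := hpu (SimpleGraph.Path.singleton h) ⟨_, hp2⟩
  have hsupp := congrArg (fun p : G.Path a b => p.1.support) this
  simp [SimpleGraph.Path.singleton] at hsupp

lemma aux_unique_mid (hac : G.IsAcyclic) {a k k' b : Fin n} (hab : a ≠ b)
    (h1 : G.Adj a k) (h2 : G.Adj k b) (h1' : G.Adj a k') (h2' : G.Adj k' b) : k = k' := by
  have hpu := SimpleGraph.isAcyclic_iff_path_unique.mp hac
  have hp : (SimpleGraph.Walk.cons h1 (SimpleGraph.Walk.cons h2 SimpleGraph.Walk.nil)).IsPath := by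
    simp [SimpleGraph.Walk.isPath_def, h1.ne, h2.ne, hab]
  have hp' : (SimpleGraph.Walk.cons h1' (SimpleGraph.Walk.cons h2' SimpleGraph.Walk.nil)).IsPath := by
    simp [SimpleGraph.Walk.isPath_def, h1'.ne, h2'.ne, hab]
  have := hpu ⟨_, hp⟩ ⟨_, hp'⟩
  have hsupp := congrArg (fun p : G.Path a b => p.1.support) this
  simp at hsupp
  exact hsupp

lemma aux_mul_adj (hac : G.IsAcyclic) {B C : Matrix (Fin n) (Fin n) ℝ}
    (hB : ∀ i j, i ≠ j → ¬ G.Adj i j → B i j = 0)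
    (hC : ∀ i j, i ≠ j → ¬ G.Adj i j → C i j = 0)
    {a b : Fin n} (hab : G.Adj a b) :
    (B * C) a b = B a a * C a b + B a b * C b b := by
  rw [Matrix.mul_apply]
  rw [← Finset.sum_subset (Finset.subset_univ ({a, b} : Finset (Fin n)))]
  · rw [Finset.sum_pair hab.ne]
  · intro k _ hk
    simp only [Finset.mem_insert, Finset.mem_singleton, not_or] at hk
    by_cases hak : G.Adj a k
    · have : ¬ G.Adj k b := fun h => aux_not_adj hac hak h hab.ne hab
      rw [hC k b hk.2 this, mul_zero]
    · rw [hB a k (Ne.symm hk.1) hak, zero_mul]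

lemma aux_mul_dist2 (hac : G.IsAcyclic) {B C : Matrix (Fin n) (Fin n) ℝ}
    (hB : ∀ i j, i ≠ j → ¬ G.Adj i j → B i j = 0)
    (hC : ∀ i j, i ≠ j → ¬ G.Adj i j → C i j = 0)
    {a k b : Fin n} (h1 : G.Adj a k) (h2 : G.Adj k b) (hab : a ≠ b) :
    (B * C) a b = B a k * C k b := by
  have hnadj : ¬ G.Adj a b := aux_not_adj hac h1 h2 hab
  rw [Matrix.mul_apply]
  apply Finset.sum_eq_single
  · intro k' _ hk'
    by_cases hk'a : k' = a
    · subst hk'a; rw [hC k' b hab hnadj, mul_zero]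
    by_cases hk'b : k' = b
    · subst hk'b; rw [hB a k' hab hnadj, zero_mul]
    by_cases hak' : G.Adj a k'
    · have : ¬ G.Adj k' b := fun h => hk' (aux_unique_mid hac hab h1 h2 hak' h).symm
      rw [hC k' b hk'b this, mul_zero]
    · rw [hB a k' (Ne.symm hk'a) hak', zero_mul]
  · intro h; exact absurd (Finset.mem_univ k) h

lemma aux_walk {P : Fin n → Prop} (step : ∀ a b, G.Adj a b → P a → P b) :
    ∀ {a b : Fin n}, G.Walk a b → P a → P b := by
  intro a b p
  induction p with
  | nil => exact id
  | cons h _ ih => exact fun ha => ih (step _ _ h ha)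

end aux

/-- Let `G` be a tree on `n ≥ 2` nodes and `A ∈ L_G` a symmetric matrix whose
entries are nonzero on all edges of `G`. Then the `L_G`-centralizer of `A`, i.e. the set of
`Y ∈ L_G` commuting with `A`, is exactly the two-dimensional span of `1` and `A`. -/
theorem tree_lssm_centralizer_eq_span_one_self
    (n : ℕ) (hn : 2 ≤ n) (G : SimpleGraph (Fin n)) (hG : G.IsTree)
    (A : Matrix (Fin n) (Fin n) ℝ) (hA : A.IsSymm)
    (hA0 : ∀ i j, i ≠ j → ¬ G.Adj i j → A i j = 0)
    (hAne : ∀ i j, G.Adj i j → A i j ≠ 0) :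
    {Y : Matrix (Fin n) (Fin n) ℝ |
        Y.IsSymm ∧ (∀ i j, i ≠ j → ¬ G.Adj i j → Y i j = 0) ∧ A * Y = Y * A} =
      (Submodule.span ℝ ({1, A} : Set (Matrix (Fin n) (Fin n) ℝ)) :
        Set (Matrix (Fin n) (Fin n) ℝ)) ∧
    Module.finrank ℝ (Submodule.span ℝ ({1, A} : Set (Matrix (Fin n) (Fin n) ℝ))) = 2 := by
  have hconn := hG.isConnected
  have hac := hG.IsAcyclic
  -- find an edge
  obtain ⟨i0, j0, e0⟩ : ∃ i j, G.Adj i j := by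
    have hne : (⟨0, by omega⟩ : Fin n) ≠ ⟨1, by omega⟩ := by simp [Fin.ext_iff]
    obtain ⟨p⟩ := hconn.preconnected ⟨0, by omega⟩ ⟨1, by omega⟩
    cases p with
    | cons h q => exact ⟨_, _, h⟩
  have hAij0 : A i0 j0 ≠ 0 := hAne _ _ e0
  constructor
  · ext Y
    simp only [Set.mem_setOf_eq, SetLike.mem_coe]
    constructor
    · rintro ⟨hYs, hY0, hYc⟩
      have hedge : ∀ a b, G.Adj a b →
          A a a * Y a b + A a b * Y b b = Y a a * A a b + Y a b * A b b := by
        intro a b hab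
        have h : (A * Y) a b = (Y * A) a b := by rw [hYc]
        rwa [aux_mul_adj hac hA0 hY0 hab, aux_mul_adj hac hY0 hA0 hab] at h
      have hdist2 : ∀ a k b, G.Adj a k → G.Adj k b → a ≠ b →
          A a k * Y k b = Y a k * A k b := by
        intro a k b h1 h2 hab
        have h : (A * Y) a b = (Y * A) a b := by rw [hYc]
        rwa [aux_mul_dist2 hac hA0 hY0 h1 h2 hab, aux_mul_dist2 hac hY0 hA0 h1 h2 hab] at h
      -- ratio constancy along the tree
      have hC0 : ∀ w, G.Adj i0 w → Y i0 w * A i0 j0 = A i0 w * Y i0 j0 := by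
        intro w hw
        by_cases hwj : w = j0
        · subst hwj; ring
        · have h := hdist2 w i0 j0 hw.symm e0 hwj
          calc Y i0 w * A i0 j0 = Y w i0 * A i0 j0 := by rw [hYs.apply i0 w]
            _ = A w i0 * Y i0 j0 := h.symm
            _ = A i0 w * Y i0 j0 := by rw [hA.apply i0 w]
      have hstep : ∀ a x, G.Adj a x →
          (∀ w, G.Adj a w → Y a w * A i0 j0 = A a w * Y i0 j0) →
          (∀ w, G.Adj x w → Y x w * A i0 j0 = A x w * Y i0 j0) := by
        intro a x hax hCa w hxw
        by_cases hw : w = a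
        · subst hw
          rw [hYs.apply w x, hA.apply w x]
          exact hCa x hax
        · have haw : a ≠ w := fun h => hw h.symm
          have htrans := hdist2 a x w hax hxw haw
          have hca := hCa x hax
          have hAax : A a x ≠ 0 := hAne a x hax
          apply mul_left_cancel₀ hAax
          calc A a x * (Y x w * A i0 j0) = (A a x * Y x w) * A i0 j0 := by ring
            _ = (Y a x * A x w) * A i0 j0 := by rw [htrans]
            _ = A x w * (Y a x * A i0 j0) := by ring
            _ = A x w * (A a x * Y i0 j0) := by rw [hca]
            _ = A a x * (A x w * Y i0 j0) := by ring
      have hratio : ∀ u v, G.Adj u v → Y u v * A i0 j0 = A u v * Y i0 j0 := by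
        intro u v huv
        obtain ⟨p⟩ := hconn.preconnected i0 u
        exact aux_walk hstep p hC0 v huv
      set β : ℝ := Y i0 j0 / A i0 j0 with hβ
      have hYedge : ∀ u v, G.Adj u v → Y u v = β * A u v := by
        intro u v huv
        rw [hβ, div_mul_eq_mul_div, eq_div_iff hAij0, hratio u v huv]
        ring
      set α : ℝ := Y i0 i0 - β * A i0 i0 with hα
      have hdstep : ∀ a b, G.Adj a b → (Y a a - β * A a a = α) → (Y b b - β * A b b = α) := by
        intro a b hab hda
        have he := hedge a b hab
        rw [hYedge a b hab] at he
        have hAab : A a b ≠ 0 := hAne a b hab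
        have key : Y b b - β * A b b = Y a a - β * A a a := by
          have h2 : A a b * (Y b b - β * A b b) = A a b * (Y a a - β * A a a) := by
            linear_combination he
          exact mul_left_cancel₀ hAab h2
        rw [key]; exact hda
      have hdiag : ∀ v, Y v v - β * A v v = α := by
        intro v
        obtain ⟨p⟩ := hconn.preconnected i0 v
        exact aux_walk hdstep p hα.symm
      have hYeq : Y = α • (1 : Matrix (Fin n) (Fin n) ℝ) + β • A := by
        ext i j
        by_cases hij : i = j
        · subst hij
          have := hdiag i
          simp only [Matrix.add_apply, Matrix.smul_apply, Matrix.one_apply_eq, smul_eq_mul,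
            mul_one]
          linarith
        · by_cases hadj : G.Adj i j
          · simp [Matrix.add_apply, Matrix.smul_apply, Matrix.one_apply_ne hij,
              hYedge i j hadj]
          · simp [Matrix.add_apply, Matrix.smul_apply, Matrix.one_apply_ne hij,
              hY0 i j hij hadj, hA0 i j hij hadj]
      exact Submodule.mem_span_pair.mpr ⟨α, β, hYeq.symm⟩
    · intro hY
      obtain ⟨s, t, rfl⟩ := Submodule.mem_span_pair.mp hY
      refine ⟨?_, ?_, ?_⟩
      · have hA' : Aᵀ = A := hA
        simp [Matrix.IsSymm, Matrix.transpose_add, Matrix.transpose_smul,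
          Matrix.transpose_one, hA']
      · intro i j hij hadj
        simp [Matrix.add_apply, Matrix.smul_apply, Matrix.one_apply_ne hij,
          hA0 i j hij hadj]
      · simp only [Matrix.mul_add, Matrix.add_mul, mul_smul_comm,
          smul_mul_assoc, Matrix.mul_one, Matrix.one_mul]
  · have hli : LinearIndependent ℝ ![(1 : Matrix (Fin n) (Fin n) ℝ), A] := by
      rw [LinearIndependent.pair_iff]
      intro s t hst
      have ht : t = 0 := by
        have h : (s • (1 : Matrix (Fin n) (Fin n) ℝ) + t • A) i0 j0 =
            (0 : Matrix (Fin n) (Fin n) ℝ) i0 j0 := by rw [hst]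
        simp [Matrix.add_apply, Matrix.smul_apply, Matrix.one_apply_ne e0.ne] at h
        rcases h with h | h
        · exact h
        · exact absurd h hAij0
      have hs : s = 0 := by
        have h : (s • (1 : Matrix (Fin n) (Fin n) ℝ) + t • A) i0 i0 =
            (0 : Matrix (Fin n) (Fin n) ℝ) i0 i0 := by rw [hst]
        simpa [Matrix.add_apply, Matrix.smul_apply, Matrix.one_apply_eq, ht] using h
      exact ⟨hs, ht⟩
    have hrange : ({1, A} : Set (Matrix (Fin n) (Fin n) ℝ)) =
        Set.range ![(1 : Matrix (Fin n) (Fin n) ℝ), A] := by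
      ext z
      simp only [Set.mem_insert_iff, Set.mem_singleton_iff, Set.mem_range,
        Fin.exists_fin_two, Matrix.cons_val_zero, Matrix.cons_val_one, Matrix.head_cons]
      tauto
    rw [hrange, finrank_span_eq_card hli]
    simp
end

section
/- Let M be a complex n×n matrix whose characteristic polynomial has n distinct roots λ₁,…,λ_n in ℂ. Then exp(M) = Σ_{i=1}^{n} exp(λ_i) · M_i, where M_i = Π_{j≠i} (λ_i − λ_j)⁻¹ (M − λ_j·id_n) and id_n is the n×n identity matrix (the product is taken in the commutative ring ℂ[M]). -/
open Matrix Polynomial Finset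

/-! Both sides act on an eigenvector of `M` for `λ_k` as multiplication by `exp λ_k`: the left
side termwise through the exponential series, the right side because it is `p(M)` for the
Lagrange interpolant `p` of `exp` at the nodes `λ_i`. Distinct eigenvalues give `n` linearly
independent eigenvectors, hence a basis, on which the two sides agree. -/

namespace Matrix

variable {ι : Type*} [Fintype ι] [DecidableEq ι]

section CommSemiring

variable {R : Type*} [CommSemiring R] {M : Matrix ι ι R} {μ : R} {v : ι → R}

theorem pow_mulVec_of_mulVec_eq_smul (h : M *ᵥ v = μ • v) (k : ℕ) :
    M ^ k *ᵥ v = μ ^ k • v := by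
  induction k with
  | zero => simp
  | succ k ih => rw [pow_succ, ← mulVec_mulVec, h, mulVec_smul, ih, smul_smul, ← pow_succ']

theorem aeval_mulVec_of_mulVec_eq_smul (h : M *ᵥ v = μ • v) (p : R[X]) :
    aeval M p *ᵥ v = p.eval μ • v := by
  induction p using Polynomial.induction_on' with
  | add p q hp hq => rw [map_add, add_mulVec, hp, hq, eval_add, add_smul]
  | monomial k c =>
    rw [aeval_monomial, eval_monomial, ← Algebra.smul_def, smul_mulVec,
      pow_mulVec_of_mulVec_eq_smul h, smul_smul, mul_comm]

end CommSemiring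

-- The exponential series converges in any Banach-algebra norm; the operator norm is a local choice.
open scoped Norms.Operator in
theorem exp_mulVec_of_mulVec_eq_smul {𝕂 : Type*} [RCLike 𝕂] {M : Matrix ι ι 𝕂} {μ : 𝕂}
    {v : ι → 𝕂} (h : M *ᵥ v = μ • v) : NormedSpace.exp M *ᵥ v = NormedSpace.exp μ • v := by
  have hM := (NormedSpace.exp_series_hasSum_exp' (𝕂 := 𝕂) M).map (mulVec.addMonoidHomLeft v)
    (continuous_id.matrix_mulVec continuous_const)
  refine hM.unique ?_
  simpa [mulVec.addMonoidHomLeft, Function.comp_def, smul_mulVec,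
    pow_mulVec_of_mulVec_eq_smul h, smul_smul] using
    (NormedSpace.exp_series_hasSum_exp' (𝕂 := 𝕂) μ).smul_const v

theorem exists_basis_mulVec_eq_smul {K : Type*} [Field K] (M : Matrix ι ι K) {lam : ι → K}
    (hroot : ∀ i, M.charpoly.IsRoot (lam i)) (hinj : Function.Injective lam) :
    ∃ b : Module.Basis ι K (ι → K), ∀ i, M *ᵥ b i = lam i • b i := by
  have hev (i : ι) : ∃ v, Module.End.HasEigenvector (toLin' M) (lam i) v :=
    ((Module.End.hasEigenvalue_iff_isRoot_charpoly _ _).mpr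
      (by rw [charpoly_toLin']; exact hroot i)).exists_hasEigenvector
  choose v hv using hev
  have hli : LinearIndependent K v := Module.End.eigenvectors_linearIndependent' _ lam hinj v hv
  refine ⟨.mk hli (hli.span_eq_top_of_card_eq_finrank' (by simp)).ge, fun i => ?_⟩
  rw [Module.Basis.mk_apply]
  exact (hv i).apply_eq_smul

theorem exp_eq_aeval_of_basis_mulVec_eq_smul {𝕂 : Type*} [RCLike 𝕂] {M : Matrix ι ι 𝕂}
    {lam : ι → 𝕂} (b : Module.Basis ι 𝕂 (ι → 𝕂)) (hb : ∀ i, M *ᵥ b i = lam i • b i)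
    {p : 𝕂[X]} (hp : ∀ i, p.eval (lam i) = NormedSpace.exp (lam i)) :
    NormedSpace.exp M = aeval M p := by
  refine toLin'.injective (b.ext fun i => ?_)
  simp only [toLin'_apply, exp_mulVec_of_mulVec_eq_smul (hb i),
    aeval_mulVec_of_mulVec_eq_smul (hb i), hp]

end Matrix

theorem Lagrange.basis_eq_smul_prod {F ι : Type*} [Field F] [DecidableEq ι] (s : Finset ι)
    (v : ι → F) (i : ι) :
    Lagrange.basis s v i = (∏ j ∈ s.erase i, (v i - v j)⁻¹) • ∏ j ∈ s.erase i, (X - C (v j)) := by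
  simp only [Lagrange.basis, basisDivisor, prod_mul_distrib, ← map_prod, smul_eq_C_mul]

/-- **Sylvester's formula for the matrix exponential.**
If `M` is a complex `n × n` matrix whose characteristic polynomial has `n` distinct roots
`λ₁, …, λ_n` in `ℂ`, then `exp(M) = ∑ i, exp(λ i) • M i`, where
`M i = ∏_{j ≠ i} (λ i - λ j)⁻¹ • (M - λ j • 1)` — the matrix product is formed in the
commutative ring `ℂ[M]`, i.e. as the evaluation at `M` of the polynomial
`∏_{j ≠ i} (X - C (λ j))`. -/
theorem sylvester_formula_exp
    (n : ℕ) (M : Matrix (Fin n) (Fin n) ℂ) (lam : Fin n → ℂ)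
    (hroots : M.charpoly.roots = Multiset.map lam Finset.univ.val)
    (hdistinct : Function.Injective lam) :
    NormedSpace.exp M =
      ∑ i : Fin n, Complex.exp (lam i) •
        ((∏ j ∈ Finset.univ.erase i, (lam i - lam j)⁻¹) •
          (Polynomial.aeval M (∏ j ∈ Finset.univ.erase i, (X - C (lam j))))) := by
  have hroot (i : Fin n) : M.charpoly.IsRoot (lam i) :=
    isRoot_of_mem_roots (hroots ▸ Multiset.mem_map_of_mem lam (mem_univ_val i))
  obtain ⟨b, hb⟩ := M.exists_basis_mulVec_eq_smul hroot hdistinct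
  have hinterp (i : Fin n) :
      (Lagrange.interpolate univ lam (fun j => Complex.exp (lam j))).eval (lam i) =
        NormedSpace.exp (lam i) := by
    rw [Lagrange.eval_interpolate_at_node _ hdistinct.injOn (mem_univ i), Complex.exp_eq_exp_ℂ]
  rw [exp_eq_aeval_of_basis_mulVec_eq_smul b hb hinterp, Lagrange.interpolate_apply, map_sum]
  simp only [← map_smul, ← Lagrange.basis_eq_smul_prod, ← smul_eq_C_mul]
end

section
/- Let L be the 2-dimensional space of real symmetric 3×3 matrices of the form [[y₁, y₂, 0], [y₂, y₁, y₂], [0, y₂, y₁]] with y₁, y₂ ∈ ℝ. Then the ideal of all polynomials in ℂ[x₁₁,x₁₂,x₁₃,x₂₂,x₂₃,x₃₃] vanishing at exp(A) for every A ∈ L equals the ideal generated by the three linear forms x₂₂ − x₁₃ − x₃₃, x₁₂ − x₂₃, x₁₁ − x₃₃ and the quadric −2x₁₃x₃₃ + x₂₃², and this ideal is prime. -/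
open Matrix MvPolynomial

/-- The point `(X₁₁, X₁₂, X₁₃, X₂₂, X₂₃, X₃₃) ∈ ℂ⁶` of upper-triangular entries of the
matrix exponential of a real `3 × 3` matrix `A`. -/
noncomputable def gibbsPoint3 (A : Matrix (Fin 3) (Fin 3) ℝ) : Fin 6 → ℂ :=
  ![((NormedSpace.exp A) 0 0 : ℂ), ((NormedSpace.exp A) 0 1 : ℂ),
    ((NormedSpace.exp A) 0 2 : ℂ), ((NormedSpace.exp A) 1 1 : ℂ),
    ((NormedSpace.exp A) 1 2 : ℂ), ((NormedSpace.exp A) 2 2 : ℂ)]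

/-- The vanishing ideal `I(exp(L))` in `ℂ[x₁₁,x₁₂,x₁₃,x₂₂,x₂₃,x₃₃]` of the exponential
image of a set `L` of real `3 × 3` matrices. -/
noncomputable def vanishingIdeal3 (L : Set (Matrix (Fin 3) (Fin 3) ℝ)) :
    Ideal (MvPolynomial (Fin 6) ℂ) where
  carrier := {q | ∀ A ∈ L, MvPolynomial.eval (gibbsPoint3 A) q = 0}
  add_mem' := by
    intro a b ha hb A hA
    simp [map_add, ha A hA, hb A hA]
  zero_mem' := by intro A hA; simp
  smul_mem' := by
    intro c q hq A hA
    simp [smul_eq_mul, _root_.map_mul, hq A hA]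

/-- The variable `x₁₁`. -/
noncomputable abbrev x11 : MvPolynomial (Fin 6) ℂ := MvPolynomial.X 0
/-- The variable `x₁₂`. -/
noncomputable abbrev x12 : MvPolynomial (Fin 6) ℂ := MvPolynomial.X 1
/-- The variable `x₁₃`. -/
noncomputable abbrev x13 : MvPolynomial (Fin 6) ℂ := MvPolynomial.X 2
/-- The variable `x₂₂`. -/
noncomputable abbrev x22 : MvPolynomial (Fin 6) ℂ := MvPolynomial.X 3
/-- The variable `x₂₃`. -/
noncomputable abbrev x23 : MvPolynomial (Fin 6) ℂ := MvPolynomial.X 4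
/-- The variable `x₃₃`. -/
noncomputable abbrev x33 : MvPolynomial (Fin 6) ℂ := MvPolynomial.X 5

/-!
The matrices `[[y₁, y₂, 0], [y₂, y₁, y₂], [0, y₂, y₁]]` are simultaneously diagonalised by one
orthogonal matrix, with eigenvalues `y₁ + √2 y₂`, `y₁`, `y₁ - √2 y₂`. Writing `a², ab, b²` for the
exponentials of the eigenvalues, `s = (a + b) / 2` and `t = (a - b) / 2`, the point of `exp A` is
`(s², √2 st, t², s² + t², √2 st, s²)`, and every `|t| < s` occurs. As this cone is Zariski dense,
the vanishing ideal is the kernel of the corresponding map `ℂ[x] → ℂ[t, s]`, hence prime.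

Modulo the four generators every polynomial reduces to `r₀(x₁₃, x₃₃) + x₂₃ r₁(x₁₃, x₃₃)`, since
`x₂₃² ≡ 2 x₁₃ x₃₃`. Such a polynomial maps to `r₀(t², s²) + √2 ts r₁(t², s²)`; flipping the sign
of `t` separates the two summands, so it lies in the kernel only if `r₀ = r₁ = 0`. Hence the
kernel is generated by the four polynomials.
-/

lemma MvPolynomial.eval_aeval {σ τ R : Type*} [CommSemiring R] (x : τ → R)
    (g : σ → MvPolynomial τ R) (p : MvPolynomial σ R) :
    eval x (aeval g p) = eval (fun i ↦ eval x (g i)) p := by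
  rw [aeval_eq_bind₁]
  exact eval₂Hom_bind₁ _ _ _ _

namespace ColouredPath3

open Real Set

noncomputable def pathMatrix (y₁ y₂ : ℝ) : Matrix (Fin 3) (Fin 3) ℝ :=
  !![y₁, y₂, 0; y₂, y₁, y₂; 0, y₂, y₁]

noncomputable def pathEigenbasis : Matrix (Fin 3) (Fin 3) ℝ :=
  !![1 / 2, √2 / 2, 1 / 2; √2 / 2, 0, -(√2 / 2); 1 / 2, -(√2 / 2), 1 / 2]

lemma pathEigenbasis_conj_diagonal (d : Fin 3 → ℝ) :
    pathEigenbasis * diagonal d * pathEigenbasis =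
      !![(d 0 + 2 * d 1 + d 2) / 4, √2 * (d 0 - d 2) / 4, (d 0 - 2 * d 1 + d 2) / 4;
        √2 * (d 0 - d 2) / 4, (d 0 + d 2) / 2, √2 * (d 0 - d 2) / 4;
        (d 0 - 2 * d 1 + d 2) / 4, √2 * (d 0 - d 2) / 4, (d 0 + 2 * d 1 + d 2) / 4] := by
  have h : √2 ^ 2 = 2 := sq_sqrt zero_le_two
  ext i j
  fin_cases i <;> fin_cases j <;>
    simp [pathEigenbasis, mul_apply, vecMul_diagonal, Fin.sum_univ_three] <;>
    ring_nf <;> (try simp only [h]) <;> (try ring_nf)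

lemma pathEigenbasis_mul_self : pathEigenbasis * pathEigenbasis = 1 := by
  have h := pathEigenbasis_conj_diagonal fun _ ↦ 1
  rw [diagonal_one, mul_one] at h
  rw [h, one_fin_three]
  norm_num

lemma pathMatrix_eq_conj (y₁ y₂ : ℝ) :
    pathMatrix y₁ y₂ =
      pathEigenbasis * diagonal ![y₁ + √2 * y₂, y₁, y₁ - √2 * y₂] * pathEigenbasis := by
  have h : √2 ^ 2 = 2 := sq_sqrt zero_le_two
  rw [pathEigenbasis_conj_diagonal, pathMatrix]
  ext i j
  fin_cases i <;> fin_cases j <;> simp <;> ring_nf <;> simp only [h] <;> ring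

lemma exp_pathMatrix (y₁ y₂ : ℝ) :
    NormedSpace.exp (pathMatrix y₁ y₂) = pathEigenbasis *
      diagonal ![Real.exp (y₁ + √2 * y₂), Real.exp y₁, Real.exp (y₁ - √2 * y₂)] *
        pathEigenbasis := by
  have hP := pathEigenbasis_mul_self
  have hconj := exp_conj pathEigenbasis (diagonal ![y₁ + √2 * y₂, y₁, y₁ - √2 * y₂])
    ⟨⟨_, _, hP, hP⟩, rfl⟩
  rw [inv_eq_left_inv hP] at hconj
  rw [pathMatrix_eq_conj, hconj, exp_diagonal]
  congr
  ext i
  fin_cases i <;> simp [Real.exp_eq_exp_ℝ]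

/-- The variables are `X 0 = t` and `X 1 = s`. -/
noncomputable def pathParam (c : ℂ) : Fin 6 → MvPolynomial (Fin 2) ℂ :=
  ![X 1 ^ 2, C c * (X 0 * X 1), X 0 ^ 2, X 0 ^ 2 + X 1 ^ 2, C c * (X 0 * X 1), X 1 ^ 2]

lemma gibbsPoint3_pathMatrix_log {a b : ℝ} (ha : 0 < a) (hb : 0 < b) :
    gibbsPoint3 (pathMatrix (log a + log b) ((log a - log b) / √2)) =
      fun i ↦ eval ![(((a - b) / 2 : ℝ) : ℂ), (((a + b) / 2 : ℝ) : ℂ)] (pathParam √2 i) := by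
  have hsqrt : √2 ≠ 0 := by positivity
  have h₀ : Real.exp (log a + log b + √2 * ((log a - log b) / √2)) = a ^ 2 := by
    rw [mul_div_cancel₀ _ hsqrt, ← Real.exp_log (pow_pos ha 2), Real.log_pow]; ring_nf
  have h₁ : Real.exp (log a + log b) = a * b := by
    rw [Real.exp_add, Real.exp_log ha, Real.exp_log hb]
  have h₂ : Real.exp (log a + log b - √2 * ((log a - log b) / √2)) = b ^ 2 := by
    rw [mul_div_cancel₀ _ hsqrt, ← Real.exp_log (pow_pos hb 2), Real.log_pow]; ring_nf
  ext i
  fin_cases i <;>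
    simp [gibbsPoint3, exp_pathMatrix, h₀, h₁, h₂, pathEigenbasis_conj_diagonal, pathParam] <;>
    ring

lemma exists_gibbsPoint3_pathMatrix_eq_of_abs_lt {t s : ℝ} (h : |t| < s) :
    ∃ y₁ y₂, gibbsPoint3 (pathMatrix y₁ y₂) =
      fun i ↦ eval ![(t : ℂ), (s : ℂ)] (pathParam √2 i) := by
  obtain ⟨ht₁, ht₂⟩ := abs_lt.mp h
  refine ⟨_, _, (gibbsPoint3_pathMatrix_log (a := s + t) (b := s - t) (by linarith)
    (by linarith)).trans ?_⟩
  ring_nf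

lemma exists_eval_eq_gibbsPoint3_pathMatrix (y₁ y₂ : ℝ) :
    ∃ t s : ℝ, gibbsPoint3 (pathMatrix y₁ y₂) =
      fun i ↦ eval ![(t : ℂ), (s : ℂ)] (pathParam √2 i) := by
  have hsqrt : √2 ≠ 0 := by positivity
  have h : pathMatrix y₁ y₂ = pathMatrix (log (Real.exp ((y₁ + √2 * y₂) / 2)) +
      log (Real.exp ((y₁ - √2 * y₂) / 2))) ((log (Real.exp ((y₁ + √2 * y₂) / 2)) -
      log (Real.exp ((y₁ - √2 * y₂) / 2))) / √2) := by
    simp only [Real.log_exp]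
    congr 1
    · ring
    · field_simp
      ring
  exact ⟨_, _, h ▸ gibbsPoint3_pathMatrix_log (Real.exp_pos _) (Real.exp_pos _)⟩

lemma vanishingIdeal3_pathMatrix :
    vanishingIdeal3 {A | ∃ y₁ y₂, A = pathMatrix y₁ y₂} =
      RingHom.ker (aeval (pathParam √2)) := by
  ext p
  rw [RingHom.mem_ker]
  constructor
  · intro hp
    refine funext_set (fun i : Fin 2 ↦ ((↑) : ℝ → ℂ) '' Ioo (i : ℝ) (i + 1))
      (fun i ↦ (Ioo_infinite (by linarith)).image Complex.ofReal_injective.injOn) ?_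
    intro x hx
    obtain ⟨t, ⟨ht₀, ht₁⟩, ht⟩ := hx 0 trivial
    obtain ⟨s, ⟨hs₁, -⟩, hs⟩ := hx 1 trivial
    norm_num at ht₀ ht₁ hs₁
    obtain ⟨y₁, y₂, hy⟩ := exists_gibbsPoint3_pathMatrix_eq_of_abs_lt (t := t) (s := s)
      (abs_lt.mpr ⟨by linarith, by linarith⟩)
    have hx : x = ![(t : ℂ), (s : ℂ)] := by
      ext i; fin_cases i <;> simp [hs, ht]
    rw [map_zero, eval_aeval, hx, ← hy]
    exact hp _ ⟨y₁, y₂, rfl⟩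
  · rintro hp _ ⟨y₁, y₂, rfl⟩
    obtain ⟨t, s, h⟩ := exists_eval_eq_gibbsPoint3_pathMatrix y₁ y₂
    rw [h, ← eval_aeval, hp, map_zero]

noncomputable def pathIdeal : Ideal (MvPolynomial (Fin 6) ℂ) :=
  Ideal.span {x22 - x13 - x33, x12 - x23, x11 - x33, -(2 * (x13 * x33)) + x23 ^ 2}

lemma pathIdeal_le_ker {c : ℂ} (hc : c ^ 2 = 2) :
    pathIdeal ≤ RingHom.ker (aeval (pathParam c)) := by
  rw [pathIdeal, Ideal.span_le]
  rintro g (rfl | rfl | rfl | rfl) <;> simp [pathParam, map_ofNat]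
  have hC : (C c : MvPolynomial (Fin 2) ℂ) ^ 2 = 2 := by rw [← map_pow, hc, map_ofNat]
  linear_combination (X 0 * X 1) ^ 2 * hC

noncomputable def normalForm (r₀ r₁ : MvPolynomial (Fin 2) ℂ) : MvPolynomial (Fin 6) ℂ :=
  rename ![2, 5] r₀ + x23 * rename ![2, 5] r₁

lemma mk_normalForm_mul (r₀ r₁ s₀ s₁ : MvPolynomial (Fin 2) ℂ) :
    Ideal.Quotient.mk pathIdeal (normalForm r₀ r₁ * normalForm s₀ s₁) =
      Ideal.Quotient.mk pathIdeal
        (normalForm (r₀ * s₀ + 2 * (X 0 * X 1) * r₁ * s₁) (r₀ * s₁ + r₁ * s₀)) := by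
  rw [Ideal.Quotient.eq]
  convert pathIdeal.mul_mem_left (rename ![2, 5] (r₁ * s₁))
    (Ideal.subset_span (by simp) : -(2 * (x13 * x33)) + x23 ^ 2 ∈ pathIdeal) using 1
  simp [normalForm, map_ofNat]
  ring

lemma exists_mk_X_eq_normalForm (i : Fin 6) :
    ∃ r₀ r₁, Ideal.Quotient.mk pathIdeal (X i) = Ideal.Quotient.mk pathIdeal (normalForm r₀ r₁) := by
  simp_rw [Ideal.Quotient.eq]
  fin_cases i
  · exact ⟨X 1, 0, Ideal.subset_span (by simp [normalForm])⟩
  · exact ⟨0, 1, Ideal.subset_span (by simp [normalForm])⟩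
  · exact ⟨X 0, 0, by simp [normalForm]⟩
  · exact ⟨X 0 + X 1, 0, Ideal.subset_span (by simp [normalForm, sub_sub])⟩
  · exact ⟨0, 1, by simp [normalForm]⟩
  · exact ⟨X 1, 0, by simp [normalForm]⟩

lemma exists_mk_eq_normalForm (p : MvPolynomial (Fin 6) ℂ) :
    ∃ r₀ r₁, Ideal.Quotient.mk pathIdeal p = Ideal.Quotient.mk pathIdeal (normalForm r₀ r₁) := by
  induction p using MvPolynomial.induction_on with
  | C a => exact ⟨C a, 0, by simp [normalForm]⟩
  | add p q hp hq =>
    obtain ⟨r₀, r₁, hr⟩ := hp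
    obtain ⟨s₀, s₁, hs⟩ := hq
    refine ⟨r₀ + s₀, r₁ + s₁, ?_⟩
    rw [map_add, hr, hs, ← map_add, normalForm, normalForm, normalForm]
    congr 1
    simp only [map_add]
    ring
  | mul_X p i hp =>
    obtain ⟨r₀, r₁, hr⟩ := hp
    obtain ⟨s₀, s₁, hs⟩ := exists_mk_X_eq_normalForm i
    exact ⟨_, _, by rw [map_mul, hr, hs, ← map_mul, mk_normalForm_mul]⟩

lemma aeval_normalForm (c : ℂ) (r₀ r₁ : MvPolynomial (Fin 2) ℂ) :
    aeval (pathParam c) (normalForm r₀ r₁) = expand 2 r₀ + C c * (X 0 * X 1) * expand 2 r₁ := by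
  have h : pathParam c ∘ ![2, 5] = fun i ↦ X i ^ 2 := by
    ext i : 1; fin_cases i <;> rfl
  simp only [normalForm, map_add, map_mul, aeval_rename, h]
  simp [pathParam, expand, aeval_eq_bind₁]

lemma aeval_neg_X_zero_expand_two (r : MvPolynomial (Fin 2) ℂ) :
    aeval ![-X 0, X 1] (expand 2 r) = expand 2 r := by
  have h : (![-X 0, X 1] ^ 2 : Fin 2 → MvPolynomial (Fin 2) ℂ) = fun i ↦ X i ^ 2 := by
    ext i : 1; fin_cases i <;> simp
  rw [aeval_expand, h, aeval_eq_bind₁]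
  rfl

lemma eq_zero_of_aeval_normalForm_eq_zero {c : ℂ} (hc : c ≠ 0) {r₀ r₁ : MvPolynomial (Fin 2) ℂ}
    (h : aeval (pathParam c) (normalForm r₀ r₁) = 0) : r₀ = 0 ∧ r₁ = 0 := by
  rw [aeval_normalForm] at h
  have h' := congrArg (aeval ![(-X 0 : MvPolynomial (Fin 2) ℂ), X 1]) h
  simp only [map_add, map_mul, aeval_neg_X_zero_expand_two, aeval_C, aeval_X, map_zero,
    algebraMap_eq, Matrix.cons_val_zero, Matrix.cons_val_one] at h'
  have h₀ : 2 * expand 2 r₀ = 0 := by linear_combination h + h'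
  have h₁ : 2 * C c * (X 0 * X 1) * expand 2 r₁ = 0 := by linear_combination h - h'
  simpa [hc, X_ne_zero, expand_eq_zero] using And.intro h₀ h₁

lemma ker_aeval_pathParam {c : ℂ} (hc : c ^ 2 = 2) :
    RingHom.ker (aeval (pathParam c)) = pathIdeal := by
  refine le_antisymm (fun p hp ↦ ?_) (pathIdeal_le_ker hc)
  obtain ⟨r₀, r₁, h⟩ := exists_mk_eq_normalForm p
  have hdiff : p - normalForm r₀ r₁ ∈ pathIdeal := Ideal.Quotient.eq.mp h
  have hnf : aeval (pathParam c) (normalForm r₀ r₁) = 0 := by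
    have := pathIdeal_le_ker hc hdiff
    rwa [RingHom.mem_ker, map_sub, RingHom.mem_ker.mp hp, zero_sub, neg_eq_zero] at this
  obtain ⟨rfl, rfl⟩ := eq_zero_of_aeval_normalForm_eq_zero (by rintro rfl; norm_num at hc) hnf
  simpa [normalForm] using hdiff

end ColouredPath3

/-- Coloured path graph with all vertices of the same colour and both edges
of the same colour: the vanishing ideal is the prime ideal generated by three linear forms
and a quadric. -/
theorem gibbs_ideal_coloured_path_8 :
    vanishingIdeal3 {A | ∃ y₁ y₂ : ℝ, A = !![y₁, y₂, 0; y₂, y₁, y₂; 0, y₂, y₁]} =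
      Ideal.span {x22 - x13 - x33, x12 - x23, x11 - x33,
        -(2 * (x13 * x33)) + x23 ^ 2} ∧
    (Ideal.span {x22 - x13 - x33, x12 - x23, x11 - x33,
        -(2 * (x13 * x33)) + x23 ^ 2} : Ideal (MvPolynomial (Fin 6) ℂ)).IsPrime := by
  have hc : ((√2 : ℝ) : ℂ) ^ 2 = 2 := by
    rw [← Complex.ofReal_pow, Real.sq_sqrt zero_le_two, Complex.ofReal_ofNat]
  have hker := ColouredPath3.ker_aeval_pathParam hc
  exact ⟨ColouredPath3.vanishingIdeal3_pathMatrix.trans hker,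
    (hker ▸ RingHom.ker_isPrime _ : ColouredPath3.pathIdeal.IsPrime)⟩
end
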